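/- arXiv:1901.10908 — 2 statements merged into one kernel-verified Lean document; each statement's English description precedes it below -/
import Mathlib

section
/- Let 0 < p̂ ≤ p̌ < 1, p₀₁ ∈ (0,1), and L > 0. Then there exist constants C_g > 0 and C_h > 0, depending only on p̂ and p̌, with the following property: for every probability space (Ω, ℱ, ℙ), every pair of real random variables K, K' on Ω with E[|K − K'|²] < ∞ and E[e^{2K'}] < ∞, every L-Lipschitz function f : ℝ → [0,∞), and every p ∈ [p̂, p̌], one has |E[f(h(p,K))·g(p,K)] − E[f(h(p,K'))·g(p,K')]| ≤ ((L(1 + p₀₁) + f(p₀₁))·C_g + (L·C_h / p̂²)·(E[e^{2K'}])^{1/2}) · (E[|K − K'|²])^{1/2}. -/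
/-!
Write `u = e^{-z}` and `d = 1 - p + p u > 0`, so that `h = p u / d` and `g = u / d²`. Then
`∂_z h = -p(1-p) g` and `∂_z g = -g (1 - p - p u) / d`, while `g ≤ 1/(4p(1-p))` by AM-GM and
`g ≤ e^z / p²` since `d ≥ p u`. Hence `h(p,·)` is `1/4`-Lipschitz and `g(p,·)` is
`1/(4p(1-p))`-Lipschitz, and on `[0,1] ∋ h` the function `f` is bounded by `L(1+p₀₁) + f(p₀₁)`.
Splitting `f(h)g - f(h')g' = f(h)(g - g') + (f(h) - f(h'))g'` gives the pointwise bound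
`(A + B e^{K'}) |K - K'|`, and Cauchy–Schwarz turns it into the stated estimate with
`C_g = 1/(4p̂(1-p̌))` and `C_h = 1/4`.
-/

open MeasureTheory Real

noncomputable section

def logisticDen (p z : ℝ) : ℝ := 1 + p * (-1 + exp (-z))

def logisticH (p z : ℝ) : ℝ := p * exp (-z) / logisticDen p z

def logisticG (p z : ℝ) : ℝ := exp (-z) / logisticDen p z ^ 2

end

lemma abs_sub_le_of_hasDerivAt {f f' : ℝ → ℝ} {C : ℝ} (hf : ∀ x, HasDerivAt f (f' x) x)
    (bound : ∀ x, |f' x| ≤ C) (x y : ℝ) : |f x - f y| ≤ C * |x - y| :=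
  convex_univ.norm_image_sub_le_of_norm_hasDerivWithin_le
    (fun z _ => (hf z).hasDerivWithinAt) (fun z _ => bound z) trivial trivial

section
variable {Ω : Type*} [MeasurableSpace Ω] {μ : Measure Ω}

lemma integral_abs_mul_abs_le_sqrt_mul_sqrt {u v : Ω → ℝ} (hu : MemLp u 2 μ)
    (hv : MemLp v 2 μ) :
    ∫ ω, |u ω| * |v ω| ∂μ ≤ √(∫ ω, u ω ^ 2 ∂μ) * √(∫ ω, v ω ^ 2 ∂μ) := by
  have := integral_mul_norm_le_Lp_mul_Lq HolderConjugate.two_two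
    (by rw [ENNReal.ofReal_ofNat]; exact hu) (by rw [ENNReal.ofReal_ofNat]; exact hv)
  simpa only [norm_eq_abs, rpow_two, sq_abs, ← sqrt_eq_rpow] using this

lemma abs_integral_sub_le_of_abs_sub_le [IsProbabilityMeasure μ] {X Y D w : Ω → ℝ} {A B : ℝ}
    (hX : Integrable X μ) (hY : Integrable Y μ) (hD : MemLp D 2 μ) (hw : MemLp w 2 μ)
    (hA : 0 ≤ A) (hB : 0 ≤ B) (h : ∀ ω, |X ω - Y ω| ≤ (A + B * |w ω|) * |D ω|) :
    |∫ ω, X ω ∂μ - ∫ ω, Y ω ∂μ| ≤ (A + B * √(∫ ω, w ω ^ 2 ∂μ)) * √(∫ ω, D ω ^ 2 ∂μ) := by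
  have hD1 : ∫ ω, |D ω| ∂μ ≤ √(∫ ω, D ω ^ 2 ∂μ) := by
    simpa using integral_abs_mul_abs_le_sqrt_mul_sqrt (memLp_const (1 : ℝ)) hD
  have hwD := integral_abs_mul_abs_le_sqrt_mul_sqrt hw hD
  have hD_int : Integrable (fun ω => |D ω|) μ := (hD.integrable one_le_two).abs
  have hwD_int : Integrable (fun ω => |w ω| * |D ω|) μ := by
    simpa only [Pi.mul_apply, abs_mul] using (hw.integrable_mul hD).abs
  calc |∫ ω, X ω ∂μ - ∫ ω, Y ω ∂μ| = |∫ ω, (X ω - Y ω) ∂μ| := by rw [integral_sub hX hY]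
    _ ≤ ∫ ω, |X ω - Y ω| ∂μ := abs_integral_le_integral_abs
    _ ≤ ∫ ω, (A * |D ω| + B * (|w ω| * |D ω|)) ∂μ :=
        integral_mono (hX.sub hY).abs ((hD_int.const_mul A).add (hwD_int.const_mul B))
          fun ω => (h ω).trans_eq (by ring)
    _ = A * ∫ ω, |D ω| ∂μ + B * ∫ ω, |w ω| * |D ω| ∂μ := by
        rw [integral_add (hD_int.const_mul A) (hwD_int.const_mul B), integral_const_mul,
          integral_const_mul]
    _ ≤ A * √(∫ ω, D ω ^ 2 ∂μ) + B * (√(∫ ω, w ω ^ 2 ∂μ) * √(∫ ω, D ω ^ 2 ∂μ)) := by gcongr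
    _ = (A + B * √(∫ ω, w ω ^ 2 ∂μ)) * √(∫ ω, D ω ^ 2 ∂μ) := by ring

end

section
variable {p phat pcheck : ℝ}

lemma logisticDen_eq (z : ℝ) : logisticDen p z = (1 - p) + p * exp (-z) := by
  unfold logisticDen; ring

lemma logisticDen_pos (hp0 : 0 < p) (hp1 : p < 1) (z : ℝ) : 0 < logisticDen p z := by
  rw [logisticDen_eq]; have := exp_pos (-z); nlinarith

lemma logisticH_mem_Icc (hp0 : 0 < p) (hp1 : p < 1) (z : ℝ) :
    logisticH p z ∈ Set.Icc (0 : ℝ) 1 := by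
  have hd := logisticDen_pos hp0 hp1 z
  have := exp_pos (-z)
  refine ⟨by unfold logisticH; positivity, ?_⟩
  rw [logisticH, div_le_one hd, logisticDen_eq]; linarith

lemma logisticG_nonneg (z : ℝ) : 0 ≤ logisticG p z := by
  unfold logisticG; positivity

-- AM-GM: `(a + b) ^ 2 ≥ 4 a b` with `a = 1 - p`, `b = p e^{-z}`.
lemma logisticG_le (hp0 : 0 < p) (hp1 : p < 1) (z : ℝ) :
    logisticG p z ≤ 1 / (4 * p * (1 - p)) := by
  have hd := logisticDen_pos hp0 hp1 z
  have h4 : 0 < 4 * p * (1 - p) := by nlinarith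
  rw [logisticG, div_le_div_iff₀ (by positivity) h4, logisticDen_eq]
  nlinarith [sq_nonneg ((1 - p) - p * exp (-z))]

lemma logisticG_le_exp_div_sq (hp0 : 0 < p) (hp1 : p < 1) (z : ℝ) :
    logisticG p z ≤ exp z / p ^ 2 := by
  have hu := exp_pos (-z)
  have hden : p * exp (-z) ≤ logisticDen p z := by rw [logisticDen_eq]; linarith
  calc logisticG p z ≤ exp (-z) / (p * exp (-z)) ^ 2 := by unfold logisticG; gcongr
    _ = exp z / p ^ 2 := by rw [exp_neg]; field_simp

lemma hasDerivAt_logisticH (hp0 : 0 < p) (hp1 : p < 1) (z : ℝ) :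
    HasDerivAt (logisticH p) (-(p * (1 - p)) * logisticG p z) z := by
  have hd := logisticDen_pos hp0 hp1 z
  have he := (hasDerivAt_neg z).exp
  refine ((he.const_mul p).div ((he.const_add (-1)).const_mul p |>.const_add 1)
    hd.ne').congr_deriv ?_
  unfold logisticG; rw [logisticDen] at hd ⊢; field_simp; ring

lemma hasDerivAt_logisticG (hp0 : 0 < p) (hp1 : p < 1) (z : ℝ) :
    HasDerivAt (logisticG p) (-logisticG p z * ((1 - p - p * exp (-z)) / logisticDen p z)) z := by
  have hd := logisticDen_pos hp0 hp1 z
  have he := (hasDerivAt_neg z).exp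
  refine (he.div (((he.const_add (-1)).const_mul p |>.const_add 1).fun_pow 2)
    (pow_pos hd 2).ne').congr_deriv ?_
  unfold logisticG; rw [logisticDen] at hd ⊢; field_simp; ring

lemma abs_logisticH_sub_le (hp0 : 0 < p) (hp1 : p < 1) (z z' : ℝ) :
    |logisticH p z - logisticH p z'| ≤ 1 / 4 * |z - z'| := by
  refine abs_sub_le_of_hasDerivAt (hasDerivAt_logisticH hp0 hp1) (fun x => ?_) z z'
  have h1p : 0 < 1 - p := by linarith
  have hpq : 0 < p * (1 - p) := by positivity
  rw [abs_mul, abs_neg, abs_of_pos hpq, abs_of_nonneg (logisticG_nonneg x)]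
  calc p * (1 - p) * logisticG p x ≤ p * (1 - p) * (1 / (4 * p * (1 - p))) := by
        gcongr; exact logisticG_le hp0 hp1 x
    _ = 1 / 4 := by field_simp

lemma abs_logisticG_sub_le (hp0 : 0 < p) (hp1 : p < 1) (z z' : ℝ) :
    |logisticG p z - logisticG p z'| ≤ 1 / (4 * p * (1 - p)) * |z - z'| := by
  refine abs_sub_le_of_hasDerivAt (hasDerivAt_logisticG hp0 hp1) (fun x => ?_) z z'
  have hd := logisticDen_pos hp0 hp1 x
  have hratio : |(1 - p - p * exp (-x)) / logisticDen p x| ≤ 1 := by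
    rw [abs_div, abs_of_pos hd, div_le_one hd, logisticDen_eq, abs_le]
    have := exp_pos (-x)
    constructor <;> nlinarith
  rw [abs_mul, abs_neg, abs_of_nonneg (logisticG_nonneg x)]
  calc logisticG p x * |(1 - p - p * exp (-x)) / logisticDen p x| ≤ logisticG p x :=
        mul_le_of_le_one_right (logisticG_nonneg x) hratio
    _ ≤ 1 / (4 * p * (1 - p)) := logisticG_le hp0 hp1 x

lemma one_div_four_mul_le_of_mem_Icc (hphat : 0 < phat) (hpcheck : pcheck < 1)
    (hp : p ∈ Set.Icc phat pcheck) : 1 / (4 * p * (1 - p)) ≤ 1 / (4 * phat * (1 - pcheck)) := by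
  obtain ⟨hlo, hhi⟩ := hp
  have : 0 < 1 - pcheck := by linarith
  exact one_div_le_one_div_of_le (by positivity) (by nlinarith)

end

noncomputable def logisticPdfIntegrand (f : ℝ → ℝ) (p z : ℝ) : ℝ :=
  f (logisticH p z) * logisticG p z

section
variable {f : ℝ → ℝ} {L p01 p phat pcheck : ℝ}

lemma apply_le_of_mem_Icc_zero_one (hL : 0 ≤ L) (hp01 : 0 ≤ p01)
    (hfL : ∀ x y, |f x - f y| ≤ L * |x - y|) {x : ℝ} (hx : x ∈ Set.Icc (0 : ℝ) 1) :
    f x ≤ L * (1 + p01) + f p01 := by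
  have hdist : |x - p01| ≤ 1 + p01 := by rw [abs_le]; constructor <;> linarith [hx.1, hx.2]
  linarith [le_abs_self (f x - f p01), hfL x p01, mul_le_mul_of_nonneg_left hdist hL]

lemma abs_logisticPdfIntegrand_le (hL : 0 ≤ L) (hp01 : 0 ≤ p01)
    (hf0 : ∀ x, 0 ≤ f x) (hfL : ∀ x y, |f x - f y| ≤ L * |x - y|)
    (hphat : 0 < phat) (hpcheck : pcheck < 1) (hp : p ∈ Set.Icc phat pcheck) (z : ℝ) :
    |logisticPdfIntegrand f p z| ≤ (L * (1 + p01) + f p01) * (1 / (4 * phat * (1 - pcheck))) := by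
  have hp0 : 0 < p := hphat.trans_le hp.1
  have hp1 : p < 1 := hp.2.trans_lt hpcheck
  rw [logisticPdfIntegrand, abs_of_nonneg (mul_nonneg (hf0 _) (logisticG_nonneg z))]
  exact mul_le_mul (apply_le_of_mem_Icc_zero_one hL hp01 hfL (logisticH_mem_Icc hp0 hp1 z))
    ((logisticG_le hp0 hp1 z).trans (one_div_four_mul_le_of_mem_Icc hphat hpcheck hp))
    (logisticG_nonneg z) (add_nonneg (mul_nonneg hL (by linarith)) (hf0 p01))

lemma abs_logisticPdfIntegrand_sub_le (hL : 0 ≤ L) (hp01 : 0 ≤ p01)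
    (hf0 : ∀ x, 0 ≤ f x) (hfL : ∀ x y, |f x - f y| ≤ L * |x - y|)
    (hphat : 0 < phat) (hpcheck : pcheck < 1) (hp : p ∈ Set.Icc phat pcheck) (z z' : ℝ) :
    |logisticPdfIntegrand f p z - logisticPdfIntegrand f p z'| ≤
      ((L * (1 + p01) + f p01) * (1 / (4 * phat * (1 - pcheck))) +
        L * (1 / 4) / phat ^ 2 * exp z') * |z - z'| := by
  have hp0 : 0 < p := hphat.trans_le hp.1
  have hp1 : p < 1 := hp.2.trans_lt hpcheck
  have hfh : |f (logisticH p z)| ≤ L * (1 + p01) + f p01 := by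
    rw [abs_of_nonneg (hf0 _)]
    exact apply_le_of_mem_Icc_zero_one hL hp01 hfL (logisticH_mem_Icc hp0 hp1 z)
  have hg : |logisticG p z - logisticG p z'| ≤ 1 / (4 * phat * (1 - pcheck)) * |z - z'| :=
    (abs_logisticG_sub_le hp0 hp1 z z').trans
      (mul_le_mul_of_nonneg_right (one_div_four_mul_le_of_mem_Icc hphat hpcheck hp) (abs_nonneg _))
  have hfh' : |f (logisticH p z) - f (logisticH p z')| ≤ L * (1 / 4 * |z - z'|) :=
    (hfL _ _).trans (mul_le_mul_of_nonneg_left (abs_logisticH_sub_le hp0 hp1 z z') hL)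
  have hg' : |logisticG p z'| ≤ exp z' / phat ^ 2 := by
    rw [abs_of_nonneg (logisticG_nonneg z')]
    exact (logisticG_le_exp_div_sq hp0 hp1 z').trans (by gcongr; exact hp.1)
  calc |logisticPdfIntegrand f p z - logisticPdfIntegrand f p z'|
      = |f (logisticH p z) * (logisticG p z - logisticG p z') +
          (f (logisticH p z) - f (logisticH p z')) * logisticG p z'| := by
        unfold logisticPdfIntegrand; ring_nf
    _ ≤ |f (logisticH p z)| * |logisticG p z - logisticG p z'| +
          |f (logisticH p z) - f (logisticH p z')| * |logisticG p z'| := by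
        rw [← abs_mul, ← abs_mul]; exact abs_add_le _ _
    _ ≤ (L * (1 + p01) + f p01) * (1 / (4 * phat * (1 - pcheck)) * |z - z'|) +
          L * (1 / 4 * |z - z'|) * (exp z' / phat ^ 2) := by
        gcongr
        exact (abs_nonneg _).trans hfh
    _ = _ := by ring

lemma continuous_logisticPdfIntegrand (hf : Continuous f) (hp0 : 0 < p) (hp1 : p < 1) :
    Continuous (logisticPdfIntegrand f p) :=
  (hf.comp (continuous_iff_continuousAt.2 fun z => (hasDerivAt_logisticH hp0 hp1 z).continuousAt)
    ).mul (continuous_iff_continuousAt.2 fun z => (hasDerivAt_logisticG hp0 hp1 z).continuousAt)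

end

theorem pdf_difference_estimate_general
    (phat pcheck p01 L : ℝ)
    (h1 : 0 < phat) (h3 : pcheck < 1)
    (hp01 : p01 ∈ Set.Ioo (0:ℝ) 1) (hL : 0 < L) :
    ∃ Cg > 0, ∃ Ch > 0,
      ∀ (Ω : Type) (_ : MeasurableSpace Ω) (ℙ : Measure Ω),
        IsProbabilityMeasure ℙ →
      ∀ (K K' : Ω → ℝ), Measurable K → Measurable K' →
        Integrable (fun ω => (K ω - K' ω)^2) ℙ →
        Integrable (fun ω => Real.exp (2 * K' ω)) ℙ →
      ∀ (f : ℝ → ℝ), (∀ x, 0 ≤ f x) → (∀ x y, |f x - f y| ≤ L * |x - y|) →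
      ∀ p ∈ Set.Icc phat pcheck,
        |(∫ ω, f (p * Real.exp (-(K ω)) / (1 + p * (-1 + Real.exp (-(K ω))))) *
              (Real.exp (-(K ω)) / (1 + p * (-1 + Real.exp (-(K ω))))^2) ∂ℙ) -
         (∫ ω, f (p * Real.exp (-(K' ω)) / (1 + p * (-1 + Real.exp (-(K' ω))))) *
              (Real.exp (-(K' ω)) / (1 + p * (-1 + Real.exp (-(K' ω))))^2) ∂ℙ)| ≤
        ((L * (1 + p01) + f p01) * Cg +
            (L * Ch / phat^2) * Real.sqrt (∫ ω, Real.exp (2 * K' ω) ∂ℙ)) *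
          Real.sqrt (∫ ω, (K ω - K' ω)^2 ∂ℙ) := by
  have h1pcheck : 0 < 1 - pcheck := by linarith
  refine ⟨1 / (4 * phat * (1 - pcheck)), by positivity, 1 / 4, by norm_num, ?_⟩
  intro Ω _ ℙ _ K K' hK hK' hKK' hexp f hf0 hfL p hp
  have hF := continuous_logisticPdfIntegrand (LipschitzWith.of_dist_le' hfL).continuous
    (h1.trans_le hp.1) (hp.2.trans_lt h3)
  have hbound := abs_logisticPdfIntegrand_le hL.le hp01.1.le hf0 hfL h1 h3 hp
  have hF_int (X : Ω → ℝ) (hX : Measurable X) :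
      Integrable (fun ω => logisticPdfIntegrand f p (X ω)) ℙ :=
    .of_bound (hF.measurable.comp hX).aestronglyMeasurable _ (.of_forall fun ω => hbound (X ω))
  have hexp_sq : ∀ ω, exp (K' ω) ^ 2 = exp (2 * K' ω) := fun ω => by rw [sq, ← exp_add, two_mul]
  have hD : MemLp (fun ω => K ω - K' ω) 2 ℙ :=
    (memLp_two_iff_integrable_sq (by fun_prop)).2 hKK'
  have hw : MemLp (fun ω => exp (K' ω)) 2 ℙ :=
    (memLp_two_iff_integrable_sq (by fun_prop)).2 (by simpa only [hexp_sq] using hexp)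
  have hest := abs_integral_sub_le_of_abs_sub_le (B := L * (1 / 4) / phat ^ 2) (hF_int K hK)
    (hF_int K' hK') hD hw ((abs_nonneg _).trans (hbound 0)) (by positivity) fun ω => by
      rw [abs_of_pos (exp_pos _)]
      exact abs_logisticPdfIntegrand_sub_le hL.le hp01.1.le hf0 hfL h1 h3 hp (K ω) (K' ω)
  simp only [hexp_sq] at hest
  exact hest

theorem pdf_difference_estimate
    (phat pcheck p01 L : ℝ)
    (h1 : 0 < phat) (h2 : phat ≤ pcheck) (h3 : pcheck < 1)
    (hp01 : p01 ∈ Set.Ioo (0:ℝ) 1) (hL : 0 < L) :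
    ∃ Cg > 0, ∃ Ch > 0,
      ∀ (Ω : Type) (_ : MeasurableSpace Ω) (ℙ : Measure Ω),
        IsProbabilityMeasure ℙ →
      ∀ (K K' : Ω → ℝ), Measurable K → Measurable K' →
        Integrable (fun ω => (K ω - K' ω)^2) ℙ →
        Integrable (fun ω => Real.exp (2 * K' ω)) ℙ →
      ∀ (f : ℝ → ℝ), (∀ x, 0 ≤ f x) → (∀ x y, |f x - f y| ≤ L * |x - y|) →
      ∀ p ∈ Set.Icc phat pcheck,
        |(∫ ω, f (p * Real.exp (-(K ω)) / (1 + p * (-1 + Real.exp (-(K ω))))) *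
              (Real.exp (-(K ω)) / (1 + p * (-1 + Real.exp (-(K ω))))^2) ∂ℙ) -
         (∫ ω, f (p * Real.exp (-(K' ω)) / (1 + p * (-1 + Real.exp (-(K' ω))))) *
              (Real.exp (-(K' ω)) / (1 + p * (-1 + Real.exp (-(K' ω))))^2) ∂ℙ)| ≤
        ((L * (1 + p01) + f p01) * Cg +
            (L * Ch / phat^2) * Real.sqrt (∫ ω, Real.exp (2 * K' ω) ∂ℙ)) *
          Real.sqrt (∫ ω, (K ω - K' ω)^2 ∂ℙ) :=
  pdf_difference_estimate_general phat pcheck p01 L h1 h3 hp01 hL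
end

section
/- Let (Ω, ℱ, ℙ) be a probability space and let P₀ and K be independent real random variables on Ω such that P₀ has a probability density function f_{P₀} (with respect to Lebesgue measure on ℝ) vanishing outside (0,1). Define Y = 1 / (1 + e^{−K}(−1 + 1/P₀)). Then Y takes values in (0,1) almost surely and has probability density function f_Y given by f_Y(y) = E[f_{P₀}(h(y,K)) · g(y,K)] for y ∈ (0,1), and f_Y(y) = 0 for y outside (0,1). -/
/-!
`logisticFlow z` is the time-`z` map of the logistic equation `p' = p (1 - p)`; it restricts to a
smooth bijection of `(0,1)` with inverse `logisticFlow (-z)`, so `h(y,k) = logisticFlow (-k) y`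
and `g(y,k) = logisticFlowDeriv (-k) y`. For a fixed value `k` of `K`, the change of variables
formula gives the density `f₀ (h(y,k)) g(y,k)` of `logisticFlow k P₀` on `(0,1)`. By independence
the law of `(P₀, K)` is a product, so the law of `Y` is the mixture over `k` of these laws, and
Tonelli turns the mixture of densities into the density `E[f₀ (h(y,K)) g(y,K)]`, which is finite
almost everywhere because `Y` has total mass one.
-/

open MeasureTheory ProbabilityTheory Set Real Function
open scoped ENNReal

noncomputable def logisticFlow (z p : ℝ) : ℝ := p * exp z / (1 + p * (-1 + exp z))

noncomputable def logisticFlowDeriv (z p : ℝ) : ℝ := exp z / (1 + p * (-1 + exp z)) ^ 2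

section LogisticFlow

variable {p : ℝ}

lemma one_add_mul_neg_one_add_exp_pos (z : ℝ) (hp : p ∈ Ioo (0 : ℝ) 1) :
    0 < 1 + p * (-1 + exp z) := by
  nlinarith [exp_pos z, hp.1, hp.2]

lemma logisticFlow_mem_Ioo (z : ℝ) (hp : p ∈ Ioo (0 : ℝ) 1) : logisticFlow z p ∈ Ioo (0 : ℝ) 1 := by
  have hd := one_add_mul_neg_one_add_exp_pos z hp
  refine ⟨div_pos (mul_pos hp.1 (exp_pos z)) hd, ?_⟩
  rw [logisticFlow, div_lt_one hd]
  linarith [hp.2]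

lemma logisticFlow_zero (p : ℝ) : logisticFlow 0 p = p := by
  simp [logisticFlow]

lemma logisticFlow_logisticFlow (a b : ℝ) (hp : p ∈ Ioo (0 : ℝ) 1) :
    logisticFlow a (logisticFlow b p) = logisticFlow (a + b) p := by
  have hd := (one_add_mul_neg_one_add_exp_pos b hp).ne'
  have hcomp : 1 + logisticFlow b p * (-1 + exp a) =
      (1 + p * (-1 + exp (a + b))) / (1 + p * (-1 + exp b)) := by
    rw [logisticFlow, exp_add]
    field_simp
    ring
  rw [logisticFlow, hcomp, logisticFlow, logisticFlow, exp_add]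
  field_simp

lemma logisticFlow_neg_logisticFlow (z : ℝ) (hp : p ∈ Ioo (0 : ℝ) 1) :
    logisticFlow (-z) (logisticFlow z p) = p := by
  rw [logisticFlow_logisticFlow _ _ hp, neg_add_cancel, logisticFlow_zero]

lemma bijOn_logisticFlow (z : ℝ) : BijOn (logisticFlow z) (Ioo 0 1) (Ioo 0 1) := by
  refine InvOn.bijOn ⟨fun p hp => logisticFlow_neg_logisticFlow z hp, fun p hp => ?_⟩
    (fun p hp => logisticFlow_mem_Ioo z hp) (fun p hp => logisticFlow_mem_Ioo (-z) hp)
  simpa using logisticFlow_neg_logisticFlow (-z) hp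

lemma hasDerivAt_logisticFlow (z : ℝ) (hd : 1 + p * (-1 + exp z) ≠ 0) :
    HasDerivAt (logisticFlow z) (logisticFlowDeriv z p) p := by
  have hnum : HasDerivAt (fun p : ℝ => p * exp z) (exp z) p := by
    simpa using (hasDerivAt_id p).mul_const (exp z)
  have hden : HasDerivAt (fun p : ℝ => 1 + p * (-1 + exp z)) (-1 + exp z) p := by
    simpa using ((hasDerivAt_id p).mul_const (-1 + exp z)).const_add 1
  exact (hnum.div hden hd).congr_deriv (by rw [logisticFlowDeriv]; ring)

lemma logisticFlowDeriv_pos (z : ℝ) (hp : p ∈ Ioo (0 : ℝ) 1) : 0 < logisticFlowDeriv z p :=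
  div_pos (exp_pos z) (pow_pos (one_add_mul_neg_one_add_exp_pos z hp) 2)

lemma logisticFlow_eq_one_div (k : ℝ) (hp : p ≠ 0) :
    logisticFlow k p = 1 / (1 + exp (-k) * (-1 + 1 / p)) := by
  have hden : 1 + exp (-k) * (-1 + 1 / p) = (1 + p * (-1 + exp k)) / (p * exp k) := by
    rw [exp_neg]
    field_simp
    ring
  rw [hden, one_div_div, logisticFlow]

@[fun_prop]
lemma Measurable.logisticFlow {α : Type*} [MeasurableSpace α] {z q : α → ℝ} (hz : Measurable z)
    (hq : Measurable q) : Measurable fun a => logisticFlow (z a) (q a) := by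
  unfold _root_.logisticFlow
  fun_prop

@[fun_prop]
lemma Measurable.logisticFlowDeriv {α : Type*} [MeasurableSpace α] {z q : α → ℝ}
    (hz : Measurable z) (hq : Measurable q) :
    Measurable fun a => logisticFlowDeriv (z a) (q a) := by
  unfold _root_.logisticFlowDeriv
  fun_prop

end LogisticFlow

theorem map_logisticFlow_restrict_withDensity (z : ℝ) (f : ℝ → ℝ≥0∞) :
    ((volume.restrict (Ioo 0 1)).withDensity f).map (logisticFlow z) =
      (volume.restrict (Ioo 0 1)).withDensity
        fun y => ENNReal.ofReal (logisticFlowDeriv (-z) y) * f (logisticFlow (-z) y) := by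
  have hmeas : Measurable (logisticFlow z) := by fun_prop
  ext s hs
  have hpre : MeasurableSet (logisticFlow z ⁻¹' s) := hmeas hs
  rw [Measure.map_apply hmeas hs, withDensity_apply _ hpre, withDensity_apply _ hs,
    ← lintegral_indicator hpre, ← lintegral_indicator hs]
  have hcov := lintegral_image_eq_lintegral_abs_deriv_mul measurableSet_Ioo
    (fun y hy => (hasDerivAt_logisticFlow (-z)
      (one_add_mul_neg_one_add_exp_pos (-z) hy).ne').hasDerivWithinAt)
    (bijOn_logisticFlow (-z)).injOn ((logisticFlow z ⁻¹' s).indicator f)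
  rw [(bijOn_logisticFlow (-z)).image_eq] at hcov
  rw [hcov]
  refine setLIntegral_congr_fun measurableSet_Ioo fun y hy => ?_
  have hinv : logisticFlow z (logisticFlow (-z) y) = y := by
    simpa using logisticFlow_neg_logisticFlow (-z) hy
  rw [abs_of_pos (logisticFlowDeriv_pos (-z) hy)]
  by_cases hys : y ∈ s <;> simp [indicator, hinv, hys]

theorem map_logisticFlow_withDensity (k : ℝ) {f₀ : ℝ → ℝ} (hsupp : ∀ x ∉ Ioo (0 : ℝ) 1, f₀ x = 0) :
    (volume.withDensity fun x => ENNReal.ofReal (f₀ x)).map (logisticFlow k) =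
      volume.withDensity ((Ioo 0 1).indicator
        fun y => ENNReal.ofReal (f₀ (logisticFlow (-k) y) * logisticFlowDeriv (-k) y)) := by
  have hrestrict : (fun x => ENNReal.ofReal (f₀ x)) =
      (Ioo 0 1).indicator fun x => ENNReal.ofReal (f₀ x) := by
    refine (indicator_eq_self.2 fun x hx => ?_).symm
    by_contra hxI
    exact hx (by simp [hsupp x hxI])
  rw [hrestrict, withDensity_indicator measurableSet_Ioo, withDensity_indicator measurableSet_Ioo,
    map_logisticFlow_restrict_withDensity]
  refine withDensity_congr_ae (ae_restrict_of_forall_mem measurableSet_Ioo fun y hy => ?_)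
  dsimp only
  rw [ENNReal.ofReal_mul' (logisticFlowDeriv_pos (-k) hy).le, mul_comm]

theorem map_prod_eq_withDensity_lintegral {α β γ : Type*} [MeasurableSpace α]
    [MeasurableSpace β] [MeasurableSpace γ] {ρ : Measure α} {ν : Measure β} {η : Measure γ}
    [SFinite ρ] [SFinite ν] [SFinite η] {F : α → β → γ} (hF : Measurable (uncurry F))
    {D : γ → β → ℝ≥0∞} (hD : Measurable (uncurry D))
    (h : ∀ b, ρ.map (F · b) = η.withDensity (D · b)) :
    (ρ.prod ν).map (uncurry F) = η.withDensity fun c => ∫⁻ b, D c b ∂ν := by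
  ext s hs
  have hslice : ∀ b, ρ ((fun a => (a, b)) ⁻¹' (uncurry F ⁻¹' s)) = ∫⁻ c in s, D c b ∂η := by
    intro b
    have hFb : Measurable (F · b) := hF.comp measurable_prodMk_right
    rw [← withDensity_apply _ hs, ← h b, Measure.map_apply hFb hs]
    rfl
  rw [Measure.map_apply hF hs, Measure.prod_apply_symm (hF hs), withDensity_apply _ hs,
    lintegral_congr hslice]
  exact lintegral_lintegral_swap (hD.comp measurable_swap).aemeasurable

theorem ae_mem_of_map_eq_withDensity {Ω : Type*} [MeasurableSpace Ω] {μ : Measure Ω}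
    {X : Ω → ℝ} (hX : Measurable X) {f : ℝ → ℝ} (hf : Measurable f) {s : Set ℝ}
    (hpdf : μ.map X = volume.withDensity fun x => ENNReal.ofReal (f x))
    (hsupp : ∀ x ∉ s, f x = 0) :
    ∀ᵐ ω ∂μ, X ω ∈ s := by
  refine ae_of_ae_map hX.aemeasurable ?_
  rw [hpdf, ae_withDensity_iff (by fun_prop)]
  refine Filter.Eventually.of_forall fun x hx => ?_
  by_contra hxs
  exact hx (by simp [hsupp x hxs])

theorem ae_lt_top_of_map_eq_withDensity {α β : Type*} [MeasurableSpace α] [MeasurableSpace β]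
    {μ : Measure α} [IsFiniteMeasure μ] {X : α → β} {η : Measure β} {F : β → ℝ≥0∞}
    (hF : Measurable F) (h : μ.map X = η.withDensity F) :
    ∀ᵐ y ∂η, F y < ∞ := by
  refine ae_lt_top hF ?_
  rw [← setLIntegral_univ, ← withDensity_apply _ MeasurableSet.univ, ← h]
  exact measure_ne_top _ _

theorem ofReal_integral_eq_lintegral_ofReal_of_ne_top {α : Type*} [MeasurableSpace α]
    {μ : Measure α} {f : α → ℝ} (hf : 0 ≤ᵐ[μ] f) (hfm : AEStronglyMeasurable f μ)
    (hfin : ∫⁻ a, ENNReal.ofReal (f a) ∂μ ≠ ∞) :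
    ENNReal.ofReal (∫ a, f a ∂μ) = ∫⁻ a, ENNReal.ofReal (f a) ∂μ := by
  rw [integral_eq_lintegral_of_nonneg_ae hf hfm, ENNReal.ofReal_toReal hfin]

theorem map_logisticFlow_eq_withDensity_of_indepFun {Ω : Type*} [MeasurableSpace Ω]
    {μ : Measure Ω} [IsFiniteMeasure μ] {P₀ K : Ω → ℝ} (hP₀ : Measurable P₀) (hK : Measurable K)
    (hindep : IndepFun P₀ K μ) {f₀ : ℝ → ℝ} (hf₀ : Measurable f₀)
    (hpdf : μ.map P₀ = volume.withDensity fun x => ENNReal.ofReal (f₀ x))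
    (hsupp : ∀ x ∉ Ioo (0 : ℝ) 1, f₀ x = 0) :
    μ.map (fun ω => logisticFlow (K ω) (P₀ ω)) = volume.withDensity ((Ioo 0 1).indicator fun y =>
      ∫⁻ ω, ENNReal.ofReal (f₀ (logisticFlow (-K ω) y) * logisticFlowDeriv (-K ω) y) ∂μ) := by
  set D : ℝ → ℝ → ℝ≥0∞ := fun y k => (Ioo 0 1).indicator
    (fun y => ENNReal.ofReal (f₀ (logisticFlow (-k) y) * logisticFlowDeriv (-k) y)) y
  have hD : Measurable (uncurry D) :=
    Measurable.indicator (by fun_prop) (measurableSet_Ioo.preimage measurable_fst)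
  have hflow : Measurable (uncurry fun p k => logisticFlow k p) := by fun_prop
  have hprod : μ.map (fun ω => (P₀ ω, K ω)) = (μ.map P₀).prod (μ.map K) :=
    (indepFun_iff_map_prod_eq_prod_map_map hP₀.aemeasurable hK.aemeasurable).mp hindep
  have hmix := map_prod_eq_withDensity_lintegral (ρ := μ.map P₀) (ν := μ.map K) hflow hD
    fun k => by rw [hpdf]; exact map_logisticFlow_withDensity k hsupp
  rw [← hprod, Measure.map_map hflow (hP₀.prodMk hK)] at hmix
  refine hmix.trans (congrArg _ (funext fun y => ?_))
  rw [lintegral_map (by fun_prop) hK]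
  by_cases hy : y ∈ Ioo (0 : ℝ) 1 <;> simp [D, hy]

theorem rvt_density_of_logistic_transform
    {Ω : Type*} [MeasurableSpace Ω] (μ : Measure Ω) [IsProbabilityMeasure μ]
    (P₀ K : Ω → ℝ) (hP₀ : Measurable P₀) (hK : Measurable K)
    (hindep : IndepFun P₀ K μ)
    (f₀ : ℝ → ℝ) (hf₀meas : Measurable f₀) (hf₀nonneg : ∀ x, 0 ≤ f₀ x)
    (hpdf : Measure.map P₀ μ =
      volume.withDensity (fun x => ENNReal.ofReal (f₀ x)))
    (hsupp : ∀ x ∉ Set.Ioo (0:ℝ) 1, f₀ x = 0)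
    (Y : Ω → ℝ)
    (hY : ∀ ω, Y ω = 1 / (1 + Real.exp (-(K ω)) * (-1 + 1 / P₀ ω))) :
    (∀ᵐ ω ∂μ, Y ω ∈ Set.Ioo (0:ℝ) 1) ∧
    Measure.map Y μ = volume.withDensity (fun y => ENNReal.ofReal
      (if y ∈ Set.Ioo (0:ℝ) 1 then
        ∫ ω, f₀ (y * Real.exp (-(K ω)) / (1 + y * (-1 + Real.exp (-(K ω))))) *
          (Real.exp (-(K ω)) / (1 + y * (-1 + Real.exp (-(K ω))))^2) ∂μ
      else 0)) := by
  have hP₀mem : ∀ᵐ ω ∂μ, P₀ ω ∈ Ioo (0 : ℝ) 1 :=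
    ae_mem_of_map_eq_withDensity hP₀ hf₀meas hpdf hsupp
  have hYflow : Y =ᵐ[μ] fun ω => logisticFlow (K ω) (P₀ ω) := by
    filter_upwards [hP₀mem] with ω hω
    rw [hY, logisticFlow_eq_one_div _ hω.1.ne']
  refine ⟨?_, ?_⟩
  · filter_upwards [hP₀mem, hYflow] with ω hω hYω
    rw [hYω]
    exact logisticFlow_mem_Ioo _ hω
  have hlaw := map_logisticFlow_eq_withDensity_of_indepFun hP₀ hK hindep hf₀meas hpdf hsupp
  have hmeas : Measurable fun y => ∫⁻ ω,
      ENNReal.ofReal (f₀ (logisticFlow (-K ω) y) * logisticFlowDeriv (-K ω) y) ∂μ :=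
    Measurable.lintegral_prod_right' (f := fun q : ℝ × Ω =>
      ENNReal.ofReal (f₀ (logisticFlow (-K q.2) q.1) * logisticFlowDeriv (-K q.2) q.1))
      (by fun_prop)
  rw [Measure.map_congr hYflow, hlaw]
  refine withDensity_congr_ae ?_
  filter_upwards [ae_lt_top_of_map_eq_withDensity (hmeas.indicator measurableSet_Ioo) hlaw]
    with y hy
  split_ifs with hyI
  · rw [indicator_of_mem hyI] at hy ⊢
    exact (ofReal_integral_eq_lintegral_ofReal_of_ne_top
      (ae_of_all _ fun ω => mul_nonneg (hf₀nonneg _) (logisticFlowDeriv_pos _ hyI).le)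
      (by fun_prop) hy.ne).symm
  · simp [hyI]
end
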